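/- arXiv:math-ph/0609016 — 4 statements merged into one kernel-verified Lean document; each statement's English description precedes it below -/
import Mathlib

section
/- Let γ : (a,b) → ℝⁿ be a regular curve with γ(t) → 0 as t → b, reparametrized by arc length as γ̄ : (a,c) → ℝⁿ. If the limit of the unit tangent γ̄'(τ) exists as τ → c, then c < ∞; i.e., the curve has finite arc length up to the collision. -/
/-! If `c = ∞`, take a continuous functional `ℓ` with `ℓ v = ‖v‖ = 1`. Then `(ℓ ∘ γ)' → 1`, so
`ℓ ∘ γ` eventually grows at least linearly and `γ` cannot tend to the origin. -/

open Filter Set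

/-- The filter of approach to `c` from the left, allowing `c = ∞`. -/
noncomputable def leftApproach (c : EReal) : Filter ℝ :=
  if c = ⊤ then Filter.atTop else nhdsWithin c.toReal (Set.Iio c.toReal)

open Topology

theorem leftApproach_top_inf_principal_Ioi (a : ℝ) : leftApproach ⊤ ⊓ 𝓟 (Ioi a) = atTop := by
  rw [leftApproach, if_pos rfl, inf_eq_left, le_principal_iff]
  exact Ioi_mem_atTop a

theorem tendsto_atTop_of_hasDerivAt_of_tendsto_deriv_pos {f f' : ℝ → ℝ} {L : ℝ}
    (hf : ∀ᶠ t in atTop, HasDerivAt f (f' t) t) (hf' : Tendsto f' atTop (𝓝 L)) (hL : 0 < L) :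
    Tendsto f atTop atTop := by
  obtain ⟨T, hT⟩ :=
    eventually_atTop.1 (hf.and (hf'.eventually (eventually_ge_nhds (half_lt_self hL))))
  have hlinear : ∀ t ≥ T, L / 2 * (t - T) ≤ f t - f T := by
    intro t ht
    refine (convex_Ici T).mul_sub_le_image_sub_of_le_deriv
      (fun x hx => (hT x hx).1.continuousAt.continuousWithinAt)
      (fun x hx => (hT x (interior_subset hx)).1.differentiableAt.differentiableWithinAt)
      (fun x hx => ?_) T self_mem_Ici t ht ht
    rw [(hT x (interior_subset hx)).1.deriv]
    exact (hT x (interior_subset hx)).2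
  refine tendsto_atTop_mono' _ ((eventually_ge_atTop T).mono fun t ht => ?_)
    (tendsto_atTop_add_const_left _ (f T)
      ((tendsto_atTop_add_const_right _ (-T) tendsto_id).const_mul_atTop (half_pos hL)))
  simp only [id]
  linarith [hlinear t ht]

theorem not_tendsto_nhds_of_hasDerivAt_of_tendsto_deriv {E : Type*} [NormedAddCommGroup E]
    [NormedSpace ℝ E] {γ γ' : ℝ → E} {v : E} (hγ : ∀ᶠ t in atTop, HasDerivAt γ (γ' t) t)
    (hγ' : Tendsto γ' atTop (𝓝 v)) (hv : v ≠ 0) (x : E) : ¬ Tendsto γ atTop (𝓝 x) := by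
  obtain ⟨ℓ, -, hℓv⟩ := exists_dual_vector ℝ v (norm_ne_zero_iff.2 hv)
  have hℓγ : Tendsto (ℓ ∘ γ) atTop atTop :=
    tendsto_atTop_of_hasDerivAt_of_tendsto_deriv_pos
      (hγ.mono fun t ht => ℓ.hasFDerivAt.comp_hasDerivAt t ht)
      ((ℓ.continuous.tendsto v).comp hγ') (by rw [hℓv]; exact norm_pos_iff.2 hv)
  exact fun h => not_tendsto_atTop_of_tendsto_nhds ((ℓ.continuous.tendsto x).comp h) hℓγ

theorem stmt_3_general {n : ℕ} (a : ℝ) (c : EReal)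
    (γ dγ : ℝ → EuclideanSpace ℝ (Fin n))
    (hdiff : ∀ τ : ℝ, a < τ → (τ : EReal) < c → HasDerivAt γ (dγ τ) τ)
    (harc : ∀ τ : ℝ, a < τ → (τ : EReal) < c → ‖dγ τ‖ = 1)
    (hcoll : Tendsto γ (leftApproach c ⊓ Filter.principal (Set.Ioi a)) (nhds 0))
    (v : EuclideanSpace ℝ (Fin n))
    (htang : Tendsto dγ (leftApproach c ⊓ Filter.principal (Set.Ioi a)) (nhds v)) :
    c < ⊤ := by
  refine lt_top_iff_ne_top.2 fun hc => ?_
  subst hc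
  rw [leftApproach_top_inf_principal_Ioi] at hcoll htang
  have hv : ‖v‖ = 1 := tendsto_nhds_unique htang.norm <| tendsto_const_nhds.congr' <|
    (eventually_gt_atTop a).mono fun τ hτ => (harc τ hτ (EReal.coe_lt_top τ)).symm
  exact not_tendsto_nhds_of_hasDerivAt_of_tendsto_deriv
    ((eventually_gt_atTop a).mono fun τ hτ => hdiff τ hτ (EReal.coe_lt_top τ)) htang
    (norm_ne_zero_iff.1 (by rw [hv]; exact one_ne_zero)) 0 hcoll

theorem stmt_3 {n : ℕ} (a : ℝ) (c : EReal) (hac : (a : EReal) < c)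
    (γ dγ : ℝ → EuclideanSpace ℝ (Fin n))
    (hdiff : ∀ τ : ℝ, a < τ → (τ : EReal) < c → HasDerivAt γ (dγ τ) τ)
    (harc : ∀ τ : ℝ, a < τ → (τ : EReal) < c → ‖dγ τ‖ = 1)
    (hγ0 : ∀ τ : ℝ, a < τ → (τ : EReal) < c → γ τ ≠ 0)
    (hcoll : Tendsto γ (leftApproach c ⊓ Filter.principal (Set.Ioi a)) (nhds 0))
    (v : EuclideanSpace ℝ (Fin n))
    (htang : Tendsto dγ (leftApproach c ⊓ Filter.principal (Set.Ioi a)) (nhds v)) :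
    c < ⊤ :=
  stmt_3_general a c γ dγ hdiff harc hcoll v htang
end

section
/- Let c(p) = (p^{αδ}, p^{α(1−δ)}, A p^{α}) for p > 0, with constants A > 0, α > 0, 0 < δ < 1. Then c(p) → 0 as p → 0⁺ and the unit vector c(p)/‖c(p)‖ converges as p → 0⁺ to (1,0,0) if δ < 1/2, to (1,1,0)/√2 if δ = 1/2, and to (0,1,0) if δ > 1/2. -/
/-!
Multiplying `c p` by `p ^ (-s)` does not change its direction. When `s` is the smallest
of the exponents `α δ`, `α (1 - δ)`, `α`, the rescaled curve has nonnegative exponents, so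
it converges as `p → 0⁺` to the nonzero vector carried by the coordinates of exponent `s`.
-/

open Filter Topology

theorem NormedSpace.tendsto_normalize {α E : Type*} [NormedAddCommGroup E] [NormedSpace ℝ E]
    {l : Filter α} {f : α → E} {v : E} (hv : v ≠ 0) (hf : Tendsto f l (𝓝 v)) :
    Tendsto (fun x => NormedSpace.normalize (f x)) l (𝓝 (NormedSpace.normalize v)) :=
  (hf.norm.inv₀ (norm_ne_zero_iff.mpr hv)).smul hf

section MonomialCurve

variable {ι : Type*} {k a b : ι → ℝ}

noncomputable def monomialCurve (k a : ι → ℝ) (p : ℝ) : EuclideanSpace ℝ ι :=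
  (EuclideanSpace.equiv ι ℝ).symm fun i => k i * p ^ a i

lemma rpow_smul_monomialCurve {p : ℝ} (hp : 0 < p) (s : ℝ) :
    p ^ s • monomialCurve k a p = monomialCurve k (fun i => a i + s) p := by
  ext i
  simp [monomialCurve, Real.rpow_add hp]
  ring

lemma continuousAt_monomialCurve_zero (ha : ∀ i, 0 ≤ a i) :
    ContinuousAt (monomialCurve k a) 0 :=
  (EuclideanSpace.equiv ι ℝ).symm.continuous.continuousAt.comp <| continuousAt_pi.mpr fun i =>
    continuousAt_const.mul (Real.continuousAt_rpow_const 0 (a i) (Or.inr (ha i)))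

lemma tendsto_monomialCurve_nhdsGT_zero (ha : ∀ i, 0 < a i) :
    Tendsto (monomialCurve k a) (𝓝[>] 0) (𝓝 0) := by
  have hzero : monomialCurve k a 0 = 0 := by
    ext i
    simp [monomialCurve, Real.zero_rpow (ha i).ne']
  have hcont := continuousAt_monomialCurve_zero (k := k) fun i => (ha i).le
  simpa [hzero] using hcont.tendsto.mono_left (nhdsWithin_le_nhds (s := Set.Ioi 0))

lemma tendsto_normalize_monomialCurve [Fintype ι] {s : ℝ} (hab : ∀ i, a i = b i + s)
    (hb : ∀ i, 0 ≤ b i) (hv : monomialCurve k b 0 ≠ 0) :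
    Tendsto (fun p => NormedSpace.normalize (monomialCurve k a p)) (𝓝[>] 0)
      (𝓝 (NormedSpace.normalize (monomialCurve k b 0))) := by
  refine ((NormedSpace.tendsto_normalize hv (continuousAt_monomialCurve_zero hb).tendsto).mono_left
    nhdsWithin_le_nhds).congr' ?_
  filter_upwards [self_mem_nhdsWithin] with p (hp : 0 < p)
  have hba : b = fun i => a i + -s := funext fun i => by rw [hab]; ring
  rw [hba, ← rpow_smul_monomialCurve hp,
    NormedSpace.normalize_smul_of_pos (Real.rpow_pos_of_pos hp _)]

end MonomialCurve

section ParallelogramCurve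

variable {A α δ : ℝ}

lemma tendsto_normalize_monomialCurve_of_lt_half (hα : 0 < α) (hδ : δ < 1 / 2) :
    Tendsto (fun p => NormedSpace.normalize
        (monomialCurve ![1, 1, A] ![α * δ, α * (1 - δ), α] p)) (𝓝[>] 0)
      (𝓝 ((EuclideanSpace.equiv (Fin 3) ℝ).symm ![1, 0, 0])) := by
  set e := (EuclideanSpace.equiv (Fin 3) ℝ).symm
  have hv : monomialCurve ![1, 1, A] ![0, α * (1 - 2 * δ), α * (1 - δ)] 0 = e ![1, 0, 0] := by
    have h1 : α * (1 - 2 * δ) ≠ 0 := by nlinarith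
    have h2 : α * (1 - δ) ≠ 0 := by nlinarith
    ext i; fin_cases i <;> simp [monomialCurve, Real.zero_rpow, h1, h2, e]
  have hnorm : ‖e ![1, 0, 0]‖ = 1 := by simp [EuclideanSpace.norm_eq, Fin.sum_univ_three, e]
  rw [← NormedSpace.normalize_eq_self_of_norm_eq_one hnorm, ← hv]
  exact tendsto_normalize_monomialCurve (s := α * δ)
    (fun i => by fin_cases i <;> simp <;> ring) (fun i => by fin_cases i <;> simp <;> nlinarith)
    (by rw [hv, ← norm_ne_zero_iff, hnorm]; exact one_ne_zero)

lemma tendsto_normalize_monomialCurve_of_eq_half (hα : 0 < α) (hδ : δ = 1 / 2) :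
    Tendsto (fun p => NormedSpace.normalize
        (monomialCurve ![1, 1, A] ![α * δ, α * (1 - δ), α] p)) (𝓝[>] 0)
      (𝓝 ((EuclideanSpace.equiv (Fin 3) ℝ).symm ![1 / √2, 1 / √2, 0])) := by
  subst hδ
  set e := (EuclideanSpace.equiv (Fin 3) ℝ).symm
  have hv : monomialCurve ![1, 1, A] ![0, 0, α / 2] 0 = e ![1, 1, 0] := by
    ext i; fin_cases i <;> simp [monomialCurve, Real.zero_rpow, hα.ne', e]
  have hnorm : ‖e ![1, 1, 0]‖ = √2 := by
    simp [EuclideanSpace.norm_eq, Fin.sum_univ_three, e]; norm_num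
  have hunit : NormedSpace.normalize (e ![1, 1, 0]) = e ![1 / √2, 1 / √2, 0] := by
    rw [NormedSpace.normalize, hnorm, ← map_smul]; congr 1; ext i; fin_cases i <;> simp
  rw [← hunit, ← hv]
  exact tendsto_normalize_monomialCurve (s := α / 2)
    (fun i => by fin_cases i <;> simp <;> ring) (fun i => by fin_cases i <;> simp; positivity)
    (by rw [hv, ← norm_ne_zero_iff, hnorm]; positivity)

lemma tendsto_normalize_monomialCurve_of_half_lt (hα : 0 < α) (hδ : 1 / 2 < δ) :
    Tendsto (fun p => NormedSpace.normalize
        (monomialCurve ![1, 1, A] ![α * δ, α * (1 - δ), α] p)) (𝓝[>] 0)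
      (𝓝 ((EuclideanSpace.equiv (Fin 3) ℝ).symm ![0, 1, 0])) := by
  set e := (EuclideanSpace.equiv (Fin 3) ℝ).symm
  have hv : monomialCurve ![1, 1, A] ![α * (2 * δ - 1), 0, α * δ] 0 = e ![0, 1, 0] := by
    have h1 : α * (2 * δ - 1) ≠ 0 := by nlinarith
    have h2 : α * δ ≠ 0 := by nlinarith
    ext i; fin_cases i <;> simp [monomialCurve, Real.zero_rpow, h1, h2, e]
  have hnorm : ‖e ![0, 1, 0]‖ = 1 := by simp [EuclideanSpace.norm_eq, Fin.sum_univ_three, e]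
  rw [← NormedSpace.normalize_eq_self_of_norm_eq_one hnorm, ← hv]
  exact tendsto_normalize_monomialCurve (s := α * (1 - δ))
    (fun i => by fin_cases i <;> simp <;> ring) (fun i => by fin_cases i <;> simp <;> nlinarith)
    (by rw [hv, ← norm_ne_zero_iff, hnorm]; exact one_ne_zero)

end ParallelogramCurve

theorem stmt_7_general (A α δ : ℝ) (hα : 0 < α) (hδ0 : 0 < δ) (hδ1 : δ < 1)
    (c : ℝ → EuclideanSpace ℝ (Fin 3))
    (hc : ∀ p : ℝ, c p = (EuclideanSpace.equiv (Fin 3) ℝ).symm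
      ![p ^ (α * δ), p ^ (α * (1 - δ)), A * p ^ α]) :
    Tendsto c (nhdsWithin 0 (Set.Ioi 0)) (nhds 0) ∧
    (δ < 1 / 2 → Tendsto (fun p => ‖c p‖⁻¹ • c p) (nhdsWithin 0 (Set.Ioi 0))
      (nhds ((EuclideanSpace.equiv (Fin 3) ℝ).symm ![1, 0, 0]))) ∧
    (δ = 1 / 2 → Tendsto (fun p => ‖c p‖⁻¹ • c p) (nhdsWithin 0 (Set.Ioi 0))
      (nhds ((EuclideanSpace.equiv (Fin 3) ℝ).symm
        ![1 / Real.sqrt 2, 1 / Real.sqrt 2, 0]))) ∧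
    (1 / 2 < δ → Tendsto (fun p => ‖c p‖⁻¹ • c p) (nhdsWithin 0 (Set.Ioi 0))
      (nhds ((EuclideanSpace.equiv (Fin 3) ℝ).symm ![0, 1, 0]))) := by
  have hcurve : c = monomialCurve ![1, 1, A] ![α * δ, α * (1 - δ), α] := by
    ext p i; fin_cases i <;> simp [hc, monomialCurve]
  subst hcurve
  have hexp : ∀ i, 0 < ![α * δ, α * (1 - δ), α] i := by
    intro i; fin_cases i <;> simp <;> nlinarith
  exact ⟨tendsto_monomialCurve_nhdsGT_zero hexp,
    tendsto_normalize_monomialCurve_of_lt_half hα,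
    tendsto_normalize_monomialCurve_of_eq_half hα,
    tendsto_normalize_monomialCurve_of_half_lt hα⟩

theorem stmt_7 (A α δ : ℝ) (hA : 0 < A) (hα : 0 < α) (hδ0 : 0 < δ) (hδ1 : δ < 1)
    (c : ℝ → EuclideanSpace ℝ (Fin 3))
    (hc : ∀ p : ℝ, c p = (EuclideanSpace.equiv (Fin 3) ℝ).symm
      ![p ^ (α * δ), p ^ (α * (1 - δ)), A * p ^ α]) :
    Tendsto c (nhdsWithin 0 (Set.Ioi 0)) (nhds 0) ∧
    (δ < 1 / 2 → Tendsto (fun p => ‖c p‖⁻¹ • c p) (nhdsWithin 0 (Set.Ioi 0))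
      (nhds ((EuclideanSpace.equiv (Fin 3) ℝ).symm ![1, 0, 0]))) ∧
    (δ = 1 / 2 → Tendsto (fun p => ‖c p‖⁻¹ • c p) (nhdsWithin 0 (Set.Ioi 0))
      (nhds ((EuclideanSpace.equiv (Fin 3) ℝ).symm
        ![1 / Real.sqrt 2, 1 / Real.sqrt 2, 0]))) ∧
    (1 / 2 < δ → Tendsto (fun p => ‖c p‖⁻¹ • c p) (nhdsWithin 0 (Set.Ioi 0))
      (nhds ((EuclideanSpace.equiv (Fin 3) ℝ).symm ![0, 1, 0]))) :=
  stmt_7_general A α δ hα hδ0 hδ1 c hc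
end

section
/- Consider positive reals b_12, …, b_34 and the energy relation b_12^{|Γ1Γ2|} · b_34^{|Γ3Γ4|} = h · b_13^{|Γ1Γ3|} · b_14^{|Γ1Γ4|} · b_23^{|Γ2Γ3|} · b_24^{|Γ2Γ4|} with h > 0 and all Γ_i ≠ 0. Suppose all b_ij(t) remain in a bounded set (0, B], and along a sequence t_n, b_12(t_n) → 0. Then some b_ij(t_{n_k}) with {i,j} ⊆ {1,3,4} or {i,j} ⊆ {2,3,4} tends to 0 along a subsequence; i.e., a third vortex must join the collision of vortices 1 and 2. -/
open Filter

theorem stmt_8 (Γ1 Γ2 Γ3 Γ4 h B : ℝ)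
    (hΓ1 : 0 < Γ1) (hΓ2 : 0 < Γ2) (hΓ3 : Γ3 < 0) (hΓ4 : Γ4 < 0) (hh : 0 < h)
    (b12 b13 b14 b23 b24 b34 : ℝ → ℝ)
    (hbdd : ∀ t : ℝ, b12 t ∈ Set.Ioc 0 B ∧ b13 t ∈ Set.Ioc 0 B ∧ b14 t ∈ Set.Ioc 0 B ∧
      b23 t ∈ Set.Ioc 0 B ∧ b24 t ∈ Set.Ioc 0 B ∧ b34 t ∈ Set.Ioc 0 B)
    (henergy : ∀ t : ℝ,
      b12 t ^ |Γ1 * Γ2| * b34 t ^ |Γ3 * Γ4| =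
        h * (b13 t ^ |Γ1 * Γ3| * (b14 t ^ |Γ1 * Γ4| *
          (b23 t ^ |Γ2 * Γ3| * b24 t ^ |Γ2 * Γ4|))))
    (t : ℕ → ℝ) (hcoll : Tendsto (fun n => b12 (t n)) atTop (nhds 0)) :
    ∃ φ : ℕ → ℕ, StrictMono φ ∧
      (Tendsto (fun n => b13 (t (φ n))) atTop (nhds 0) ∨
       Tendsto (fun n => b14 (t (φ n))) atTop (nhds 0) ∨
       Tendsto (fun n => b34 (t (φ n))) atTop (nhds 0) ∨
       Tendsto (fun n => b23 (t (φ n))) atTop (nhds 0) ∨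
       Tendsto (fun n => b24 (t (φ n))) atTop (nhds 0)) := by
  set e12 := |Γ1 * Γ2| with he12
  set e13 := |Γ1 * Γ3| with he13
  set e14 := |Γ1 * Γ4| with he14
  set e23 := |Γ2 * Γ3| with he23
  set e24 := |Γ2 * Γ4| with he24
  set e34 := |Γ3 * Γ4| with he34
  have h12 : 0 < e12 := abs_pos.2 (mul_ne_zero hΓ1.ne' hΓ2.ne')
  have h13 : 0 < e13 := abs_pos.2 (mul_ne_zero hΓ1.ne' hΓ3.ne)
  have h14 : 0 < e14 := abs_pos.2 (mul_ne_zero hΓ1.ne' hΓ4.ne)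
  have h23 : 0 < e23 := abs_pos.2 (mul_ne_zero hΓ2.ne' hΓ3.ne)
  have h24 : 0 < e24 := abs_pos.2 (mul_ne_zero hΓ2.ne' hΓ4.ne)
  have h34 : 0 < e34 := abs_pos.2 (mul_ne_zero hΓ3.ne hΓ4.ne)
  set E := e13 + e14 + e23 + e24 with hE
  have hEpos : 0 < E := by positivity
  -- the minimum of the four distances
  set m : ℕ → ℝ := fun n => min (b13 (t n)) (min (b14 (t n)) (min (b23 (t n)) (b24 (t n)))) with hm
  have hBpos : 0 < B := lt_of_lt_of_le (hbdd (t 0)).1.1 (hbdd (t 0)).1.2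
  have hmpos : ∀ n, 0 < m n := fun n => by
    obtain ⟨h1, h2, h3, h4, h5, h6⟩ := hbdd (t n)
    exact lt_min h2.1 (lt_min h3.1 (lt_min h4.1 h5.1))
  -- key bound : m n ^ E ≤ b12^(e12) * B^(e34) / h
  have key : ∀ n, m n ^ E ≤ b12 (t n) ^ e12 * B ^ e34 / h := by
    intro n
    obtain ⟨h1, h2, h3, h4, h5, h6⟩ := hbdd (t n)
    have hm13 : m n ≤ b13 (t n) := min_le_left _ _
    have hm14 : m n ≤ b14 (t n) := le_trans (min_le_right _ _) (min_le_left _ _)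
    have hm23 : m n ≤ b23 (t n) := le_trans (min_le_right _ _)
      (le_trans (min_le_right _ _) (min_le_left _ _))
    have hm24 : m n ≤ b24 (t n) := le_trans (min_le_right _ _)
      (le_trans (min_le_right _ _) (min_le_right _ _))
    have hmnn : 0 ≤ m n := (hmpos n).le
    have expand : m n ^ E = m n ^ e13 * (m n ^ e14 * (m n ^ e23 * m n ^ e24)) := by
      rw [hE]
      rw [Real.rpow_add (hmpos n), Real.rpow_add (hmpos n), Real.rpow_add (hmpos n)]
      ring
    have hle : m n ^ E ≤ b13 (t n) ^ e13 * (b14 (t n) ^ e14 *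
        (b23 (t n) ^ e23 * b24 (t n) ^ e24)) := by
      rw [expand]
      have A13 := Real.rpow_le_rpow hmnn hm13 h13.le
      have A14 := Real.rpow_le_rpow hmnn hm14 h14.le
      have A23 := Real.rpow_le_rpow hmnn hm23 h23.le
      have A24 := Real.rpow_le_rpow hmnn hm24 h24.le
      have nn : ∀ x : ℝ, ∀ e : ℝ, 0 ≤ x → (0:ℝ) ≤ x ^ e := fun x e hx => Real.rpow_nonneg hx e
      exact mul_le_mul A13 (mul_le_mul A14 (mul_le_mul A23 A24 (nn _ _ hmnn) (nn _ _ h4.1.le))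
        (mul_nonneg (nn _ _ hmnn) (nn _ _ hmnn)) (nn _ _ h3.1.le))
        (mul_nonneg (nn _ _ hmnn) (mul_nonneg (nn _ _ hmnn) (nn _ _ hmnn))) (nn _ _ h2.1.le)
    have hrhs : h * (b13 (t n) ^ e13 * (b14 (t n) ^ e14 *
        (b23 (t n) ^ e23 * b24 (t n) ^ e24))) ≤ b12 (t n) ^ e12 * B ^ e34 := by
      rw [← henergy (t n)]
      exact mul_le_mul_of_nonneg_left (Real.rpow_le_rpow h6.1.le h6.2 h34.le)
        (Real.rpow_nonneg h1.1.le _)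
    rw [le_div_iff₀ hh]
    calc m n ^ E * h ≤ (b13 (t n) ^ e13 * (b14 (t n) ^ e14 *
          (b23 (t n) ^ e23 * b24 (t n) ^ e24))) * h := by
          exact mul_le_mul_of_nonneg_right hle hh.le
      _ = h * (b13 (t n) ^ e13 * (b14 (t n) ^ e14 *
          (b23 (t n) ^ e23 * b24 (t n) ^ e24))) := by ring
      _ ≤ b12 (t n) ^ e12 * B ^ e34 := hrhs
  -- the upper bound tends to 0
  have hub : Tendsto (fun n => b12 (t n) ^ e12 * B ^ e34 / h) atTop (nhds 0) := by
    have h1 : Tendsto (fun n => b12 (t n) ^ e12) atTop (nhds 0) := by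
      have := hcoll.rpow_const (p := e12) (Or.inr h12.le)
      simpa [Real.zero_rpow h12.ne'] using this
    have := (h1.mul_const (B ^ e34)).div_const h
    simpa using this
  -- hence m^E → 0, hence m → 0 by squeeze
  have hmE : Tendsto (fun n => m n ^ E) atTop (nhds 0) := by
    refine squeeze_zero (fun n => (Real.rpow_pos_of_pos (hmpos n) E).le) key hub
  have hm0 : Tendsto m atTop (nhds 0) := by
    have h1 : Tendsto (fun n => (m n ^ E) ^ E⁻¹) atTop (nhds 0) := by
      have := hmE.rpow_const (p := E⁻¹) (Or.inr (inv_nonneg.2 hEpos.le))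
      simpa [Real.zero_rpow (inv_ne_zero hEpos.ne')] using this
    have heq : (fun n => (m n ^ E) ^ E⁻¹) = m := by
      funext n
      exact Real.rpow_rpow_inv (hmpos n).le hEpos.ne'
    rw [← heq]
    exact h1
  -- pigeonhole: m equals one of the four frequently
  have hcases : ∀ n, m n = b13 (t n) ∨ m n = b14 (t n) ∨ m n = b23 (t n) ∨ m n = b24 (t n) := by
    intro n
    rcases min_cases (b13 (t n)) (min (b14 (t n)) (min (b23 (t n)) (b24 (t n)))) with h' | h'
    · exact Or.inl h'.1
    rcases min_cases (b14 (t n)) (min (b23 (t n)) (b24 (t n))) with h'' | h''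
    · exact Or.inr (Or.inl (h'.1.trans h''.1))
    rcases min_cases (b23 (t n)) (b24 (t n)) with h''' | h'''
    · exact Or.inr (Or.inr (Or.inl ((h'.1.trans h''.1).trans h'''.1)))
    · exact Or.inr (Or.inr (Or.inr ((h'.1.trans h''.1).trans h'''.1)))
  have hfreq : (∃ᶠ n in atTop, m n = b13 (t n)) ∨ (∃ᶠ n in atTop, m n = b14 (t n)) ∨
      (∃ᶠ n in atTop, m n = b23 (t n)) ∨ (∃ᶠ n in atTop, m n = b24 (t n)) := by
    have : ∃ᶠ n in atTop, (m n = b13 (t n) ∨ m n = b14 (t n) ∨ m n = b23 (t n) ∨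
        m n = b24 (t n)) := Frequently.of_forall hcases
    rw [frequently_or_distrib, frequently_or_distrib, frequently_or_distrib] at this
    exact this
  have tendsto_of_eq : ∀ (g : ℕ → ℝ), (∃ᶠ n in atTop, m n = g n) →
      ∃ φ : ℕ → ℕ, StrictMono φ ∧ Tendsto (fun n => g (φ n)) atTop (nhds 0) := by
    intro g hg
    obtain ⟨φ, hφ, hφeq⟩ := extraction_of_frequently_atTop hg
    refine ⟨φ, hφ, ?_⟩
    have : Tendsto (fun n => m (φ n)) atTop (nhds 0) := hm0.comp hφ.tendsto_atTop
    refine this.congr fun n => (hφeq n)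
  rcases hfreq with hf | hf | hf | hf
  · obtain ⟨φ, h1, h2⟩ := tendsto_of_eq _ hf
    exact ⟨φ, h1, Or.inl h2⟩
  · obtain ⟨φ, h1, h2⟩ := tendsto_of_eq _ hf
    exact ⟨φ, h1, Or.inr (Or.inl h2)⟩
  · obtain ⟨φ, h1, h2⟩ := tendsto_of_eq _ hf
    exact ⟨φ, h1, Or.inr (Or.inr (Or.inr (Or.inl h2)))⟩
  · obtain ⟨φ, h1, h2⟩ := tendsto_of_eq _ hf
    exact ⟨φ, h1, Or.inr (Or.inr (Or.inr (Or.inr h2)))⟩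
end

section
/- Let ρ : ℝ → (0,∞) and β_ij : ℝ → (0,1] for 1 ≤ i < j ≤ N satisfy the energy identity h/ρ(t)^V = ∏_{i<j} β_ij(t)^{Γ_iΓ_j} with h > 0, V = Σ_{i<j} Γ_iΓ_j > 0, and all Γ_i ≠ 0. If there is a sequence t_n → T with ρ(t_n) → 0, then there exist indices i < j with Γ_iΓ_j < 0 and a subsequence t_{n_k} with β_ij(t_{n_k}) → 0. -/
/-!
Along `t n` the left side `h / ρ ^ V` of the energy identity blows up, since `V > 0`.
A finite product of bounded nonnegative factors stays bounded, so some factor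
`β i j ^ (Γ i Γ j)` is unbounded along `t n`; along a subsequence it tends to `∞`.
As `β i j ≤ 1`, this forces the exponent `Γ i Γ j` to be negative, and then `β i j → 0`.
-/

open Filter Topology

section

variable {α : Type*} {l : Filter α}

lemma tendsto_div_rpow_atTop_of_tendsto_zero {ρ : α → ℝ} {h V : ℝ} (hh : 0 < h)
    (hV : 0 < V) (hρ : ∀ a, 0 < ρ a) (hρ0 : Tendsto ρ l (𝓝 0)) :
    Tendsto (fun a => h / ρ a ^ V) l atTop := by
  have hρ0' : Tendsto ρ l (𝓝[>] 0) :=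
    tendsto_nhdsWithin_iff.mpr ⟨hρ0, .of_forall hρ⟩
  refine ((tendsto_rpow_neg_nhdsGT_zero (neg_lt_zero.mpr hV)).comp hρ0').const_mul_atTop hh
    |>.congr fun a => ?_
  simp [Real.rpow_neg (hρ a).le, div_eq_mul_inv]

lemma isBoundedUnder_le_finset_prod {ι : Type*} {s : Finset ι} {f : ι → α → ℝ}
    (hf0 : ∀ i ∈ s, ∀ a, 0 ≤ f i a) (hf : ∀ i ∈ s, IsBoundedUnder (· ≤ ·) l (f i)) :
    IsBoundedUnder (· ≤ ·) l (fun a => ∏ i ∈ s, f i a) := by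
  choose! M hM using fun i hi => (hf i hi).eventually_le
  refine isBoundedUnder_of_eventually_le (a := ∏ i ∈ s, M i) ?_
  filter_upwards [(eventually_all_finset s).mpr hM] with a ha
  exact Finset.prod_le_prod (fun i hi => hf0 i hi a) ha

lemma exists_not_isBoundedUnder_of_tendsto_finset_prod_atTop [l.NeBot] {ι : Type*}
    {s : Finset ι} {f : ι → α → ℝ} (hf0 : ∀ i ∈ s, ∀ a, 0 ≤ f i a)
    (hf : Tendsto (fun a => ∏ i ∈ s, f i a) l atTop) :
    ∃ i ∈ s, ¬ IsBoundedUnder (· ≤ ·) l (f i) := by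
  by_contra! hbdd
  exact not_isBoundedUnder_of_tendsto_atTop hf (isBoundedUnder_le_finset_prod hf0 hbdd)

lemma neg_of_tendsto_rpow_atTop [l.NeBot] {x : α → ℝ} {e : ℝ}
    (hx : ∀ a, x a ∈ Set.Ioc 0 1) (h : Tendsto (fun a => x a ^ e) l atTop) : e < 0 := by
  by_contra! he
  obtain ⟨a, ha⟩ := (h.eventually_gt_atTop 1).exists
  exact ha.not_ge (Real.rpow_le_one (hx a).1.le (hx a).2 he)

lemma tendsto_zero_of_rpow_tendsto_atTop {x : α → ℝ} {e : ℝ} (he : e < 0)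
    (hx : ∀ a, 0 ≤ x a) (h : Tendsto (fun a => x a ^ e) l atTop) :
    Tendsto x l (𝓝 0) := by
  refine ((tendsto_rpow_neg_atTop (neg_pos.mpr (one_div_neg.mpr he))).comp h).congr fun a => ?_
  simp only [Function.comp_apply, neg_neg]
  rw [← Real.rpow_mul (hx a), mul_one_div_cancel he.ne, Real.rpow_one]

end

lemma exists_strictMono_tendsto_atTop_of_not_isBoundedUnder {u : ℕ → ℝ}
    (hu : ¬ IsBoundedUnder (· ≤ ·) atTop u) :
    ∃ φ : ℕ → ℕ, StrictMono φ ∧ Tendsto (u ∘ φ) atTop atTop := by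
  simp only [IsBoundedUnder, IsBounded, eventually_map, not_exists, not_eventually,
    not_le] at hu
  obtain ⟨φ, hφ, hφu⟩ := extraction_forall_of_frequently fun k : ℕ => hu k
  exact ⟨φ, hφ, tendsto_atTop_mono (fun k => (hφu k).le) tendsto_natCast_atTop_atTop⟩

theorem stmt_18_general (N : ℕ) (Γ : Fin N → ℝ)
    (h : ℝ) (hh : 0 < h)
    (V : ℝ)
    (hVpos : 0 < V)
    (ρ : ℝ → ℝ) (hρ : ∀ t, 0 < ρ t)
    (β : Fin N → Fin N → ℝ → ℝ)
    (hβ : ∀ i j : Fin N, i < j → ∀ t : ℝ, β i j t ∈ Set.Ioc (0 : ℝ) 1)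
    (henergy : ∀ t : ℝ,
      h / ρ t ^ V =
        ∏ p ∈ Finset.univ.filter (fun p : Fin N × Fin N => p.1 < p.2),
          β p.1 p.2 t ^ (Γ p.1 * Γ p.2))
    (t : ℕ → ℝ)
    (hρ0 : Tendsto (fun n => ρ (t n)) atTop (nhds 0)) :
    ∃ i j : Fin N, i < j ∧ Γ i * Γ j < 0 ∧
      ∃ φ : ℕ → ℕ, StrictMono φ ∧
        Tendsto (fun k => β i j (t (φ k))) atTop (nhds 0) := by
  have hprod := tendsto_div_rpow_atTop_of_tendsto_zero hh hVpos (fun n => hρ (t n)) hρ0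
  simp only [henergy] at hprod
  obtain ⟨⟨i, j⟩, hmem, hunbdd⟩ := exists_not_isBoundedUnder_of_tendsto_finset_prod_atTop
    (fun p hp n => (Real.rpow_pos_of_pos (hβ _ _ (Finset.mem_filter.mp hp).2 _).1 _).le) hprod
  have hij : i < j := (Finset.mem_filter.mp hmem).2
  obtain ⟨φ, hφ, hφtop⟩ := exists_strictMono_tendsto_atTop_of_not_isBoundedUnder hunbdd
  have hneg := neg_of_tendsto_rpow_atTop (fun k => hβ i j hij (t (φ k))) hφtop
  exact ⟨i, j, hij, hneg, φ, hφ,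
    tendsto_zero_of_rpow_tendsto_atTop hneg (fun k => (hβ i j hij _).1.le) hφtop⟩

theorem stmt_18 (N : ℕ) (Γ : Fin N → ℝ) (hΓ : ∀ i, Γ i ≠ 0)
    (h : ℝ) (hh : 0 < h)
    (V : ℝ)
    (hV : V = ∑ p ∈ Finset.univ.filter (fun p : Fin N × Fin N => p.1 < p.2),
      Γ p.1 * Γ p.2)
    (hVpos : 0 < V)
    (ρ : ℝ → ℝ) (hρ : ∀ t, 0 < ρ t)
    (β : Fin N → Fin N → ℝ → ℝ)
    (hβ : ∀ i j : Fin N, i < j → ∀ t : ℝ, β i j t ∈ Set.Ioc (0 : ℝ) 1)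
    (hsum : ∀ t : ℝ,
      (∑ p ∈ Finset.univ.filter (fun p : Fin N × Fin N => p.1 < p.2), β p.1 p.2 t) = 1)
    (henergy : ∀ t : ℝ,
      h / ρ t ^ V =
        ∏ p ∈ Finset.univ.filter (fun p : Fin N × Fin N => p.1 < p.2),
          β p.1 p.2 t ^ (Γ p.1 * Γ p.2))
    (t : ℕ → ℝ) (T : ℝ) (htT : Tendsto t atTop (nhds T))
    (hρ0 : Tendsto (fun n => ρ (t n)) atTop (nhds 0)) :
    ∃ i j : Fin N, i < j ∧ Γ i * Γ j < 0 ∧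
      ∃ φ : ℕ → ℕ, StrictMono φ ∧
        Tendsto (fun k => β i j (t (φ k))) atTop (nhds 0) :=
  stmt_18_general N Γ h hh V hVpos ρ hρ β hβ henergy t hρ0
end
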